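/- Pointwise bound on the log-price derivative of G: for any constants 0 < c₁ ≤ c₂ there exists C > 0 (depending only on c₁ and c₂) such that for all τ ∈ (0,1], x, k ∈ ℝ and σ ∈ [c₁, c₂], |∂_x G(τ,x,k,σ)| ≤ C τ^{−2}. -/

import Mathlib

set_option maxHeartbeats 1000000


open Real MeasureTheory Set Filter

/-- Standard normal CDF `N(z) = (2π)^{-1/2} ∫_{-∞}^z e^{-t²/2} dt`. -/
noncomputable def Ncdf (z : ℝ) : ℝ :=
  (Real.sqrt (2 * Real.pi))⁻¹ * ∫ t in Set.Iic z, Real.exp (-t ^ 2 / 2)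

/-- Standard normal density `φ(z) = (2π)^{-1/2} e^{-z²/2}`. -/
noncomputable def phi (z : ℝ) : ℝ :=
  (Real.sqrt (2 * Real.pi))⁻¹ * Real.exp (-z ^ 2 / 2)

/-- `d₂ = (x-k)/(σ√τ) - σ√τ/2`. -/
noncomputable def d2 (τ x k σ : ℝ) : ℝ :=
  (x - k) / (σ * Real.sqrt τ) - σ * Real.sqrt τ / 2

/-- `d₁ = d₂ - σ√τ`. -/
noncomputable def d1 (τ x k σ : ℝ) : ℝ :=
  d2 τ x k σ - σ * Real.sqrt τ

/-- Black–Scholes price of an Inverse European call: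
`BS(τ,x,k,σ) = N(d₂) - e^{σ²τ + k - x} N(d₁)`. -/
noncomputable def BS (τ x k σ : ℝ) : ℝ :=
  Ncdf (d2 τ x k σ) - Real.exp (σ ^ 2 * τ + k - x) * Ncdf (d1 τ x k σ)

/-- Complementary error function `Erfc(z) = (2/√π) ∫_z^∞ e^{-t²} dt`. -/
noncomputable def Erfc (z : ℝ) : ℝ :=
  2 / Real.sqrt Real.pi * ∫ t in Set.Ioi z, Real.exp (-t ^ 2)

/-- `H(τ,x,k,σ) = ½ (∂³ₓₓₓ BS - ∂²ₓₓ BS)(τ,x,k,σ)`. -/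
noncomputable def Hfun (τ x k σ : ℝ) : ℝ :=
  (1 / 2) * (iteratedDeriv 3 (fun x' => BS τ x' k σ) x
    - iteratedDeriv 2 (fun x' => BS τ x' k σ) x)

/-- `G(τ,x,k,σ) = ∂ₖ H(τ,x,k,σ) - H(τ,x,k,σ)`. -/
noncomputable def Gfun (τ x k σ : ℝ) : ℝ :=
  deriv (fun k' => Hfun τ x k' σ) k - Hfun τ x k σ

lemma integrable_gauss : Integrable (fun t : ℝ => Real.exp (-t ^ 2 / 2)) := by
  have h := integrable_exp_neg_mul_sq (by norm_num : (0:ℝ) < 1/2)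
  convert h using 2 with t
  ring_nf

lemma hasDerivAt_Ncdf (z : ℝ) : HasDerivAt Ncdf (phi z) z := by
  have key : ∀ y : ℝ, Ncdf y = (Real.sqrt (2 * Real.pi))⁻¹ *
      ((∫ t in Set.Iic (0:ℝ), Real.exp (-t ^ 2 / 2)) + ∫ t in (0:ℝ)..y, Real.exp (-t ^ 2 / 2)) := by
    intro y
    unfold Ncdf
    congr 1
    have := intervalIntegral.integral_Iic_sub_Iic
      (integrable_gauss.integrableOn (s := Set.Iic (0:ℝ)))
      (integrable_gauss.integrableOn (s := Set.Iic y))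
    linarith
  have hcont : Continuous fun t : ℝ => Real.exp (-t ^ 2 / 2) := by continuity
  have h1 : HasDerivAt (fun y : ℝ => ∫ t in (0:ℝ)..y, Real.exp (-t ^ 2 / 2))
      (Real.exp (-z ^ 2 / 2)) z :=
    intervalIntegral.integral_hasDerivAt_right
      (integrable_gauss.intervalIntegrable)
      (hcont.stronglyMeasurableAtFilter _ _)
      hcont.continuousAt
  have h2 := ((h1.const_add (∫ t in Set.Iic (0:ℝ), Real.exp (-t ^ 2 / 2))).const_mul
      (Real.sqrt (2 * Real.pi))⁻¹)
  have := h2.congr_of_eventuallyEq (Filter.Eventually.of_forall fun y => (key y))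
  simpa [phi, mul_comm] using this

lemma hasDerivAt_phi (z : ℝ) : HasDerivAt phi (-z * phi z) z := by
  have h1 : HasDerivAt (fun z : ℝ => -z ^ 2 / 2) (-z) z := by
    have := ((hasDerivAt_pow 2 z).neg).div_const 2
    exact this.congr_deriv (by ring)
  have := (h1.exp).const_mul (Real.sqrt (2 * Real.pi))⁻¹
  unfold phi
  exact this.congr_deriv (by ring)

lemma exp_phi_id (τ x k σ : ℝ) (hτ : 0 < τ) (hσ : 0 < σ) :
    Real.exp (σ ^ 2 * τ + k - x) * phi (d1 τ x k σ) = phi (d2 τ x k σ) := by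
  unfold phi d1 d2
  set r := Real.sqrt τ with hrdef
  have hr : r > 0 := Real.sqrt_pos.mpr hτ
  have hr2 : r ^ 2 = τ := Real.sq_sqrt hτ.le
  have hs : σ * r ≠ 0 := by positivity
  rw [mul_comm (Real.exp _), mul_assoc, ← Real.exp_add]
  congr 1
  rw [← hr2]
  field_simp
  ring

section derivs
variable (τ k σ : ℝ)

lemma hasDerivAt_d2_x (x : ℝ) :
    HasDerivAt (fun x' => d2 τ x' k σ) (σ * Real.sqrt τ)⁻¹ x := by
  unfold d2
  have := (((hasDerivAt_id x).sub_const k).div_const (σ * Real.sqrt τ)).sub_const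
    (σ * Real.sqrt τ / 2)
  simpa [one_div] using this

lemma hasDerivAt_d1_x (x : ℝ) :
    HasDerivAt (fun x' => d1 τ x' k σ) (σ * Real.sqrt τ)⁻¹ x := by
  unfold d1
  exact (hasDerivAt_d2_x τ k σ x).sub_const _

lemma hasDerivAt_exp_x (x : ℝ) :
    HasDerivAt (fun x' => Real.exp (σ ^ 2 * τ + k - x')) (-Real.exp (σ ^ 2 * τ + k - x)) x := by
  have h := ((hasDerivAt_id x).const_sub (σ ^ 2 * τ + k)).exp
  simpa using h

lemma hasDerivAt_Nd1_x (x : ℝ) :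
    HasDerivAt (fun x' => Ncdf (d1 τ x' k σ))
      (phi (d1 τ x k σ) * (σ * Real.sqrt τ)⁻¹) x :=
  (hasDerivAt_Ncdf _).comp x (hasDerivAt_d1_x τ k σ x)

lemma hasDerivAt_phid1_x (x : ℝ) :
    HasDerivAt (fun x' => phi (d1 τ x' k σ))
      (-(d1 τ x k σ) * phi (d1 τ x k σ) * (σ * Real.sqrt τ)⁻¹) x := by
  have := (hasDerivAt_phi (d1 τ x k σ)).comp x (hasDerivAt_d1_x τ k σ x)
  simpa [mul_assoc, Function.comp_def] using this

lemma BS_deriv1 (hτ : 0 < τ) (hσ : 0 < σ) (x : ℝ) :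
    HasDerivAt (fun x' => BS τ x' k σ)
      (Real.exp (σ ^ 2 * τ + k - x) * Ncdf (d1 τ x k σ)) x := by
  have hN2 : HasDerivAt (fun x' => Ncdf (d2 τ x' k σ))
      (phi (d2 τ x k σ) * (σ * Real.sqrt τ)⁻¹) x :=
    (hasDerivAt_Ncdf _).comp x (hasDerivAt_d2_x τ k σ x)
  have h := hN2.sub ((hasDerivAt_exp_x τ k σ x).mul (hasDerivAt_Nd1_x τ k σ x))
  have heq : phi (d2 τ x k σ) * (σ * Real.sqrt τ)⁻¹ -
      (-Real.exp (σ ^ 2 * τ + k - x) * Ncdf (d1 τ x k σ) +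
        Real.exp (σ ^ 2 * τ + k - x) * (phi (d1 τ x k σ) * (σ * Real.sqrt τ)⁻¹)) =
      Real.exp (σ ^ 2 * τ + k - x) * Ncdf (d1 τ x k σ) := by
    rw [← exp_phi_id τ x k σ hτ hσ]; ring
  rw [heq] at h
  exact (by unfold BS; exact h)

lemma g1_deriv (x : ℝ) :
    HasDerivAt (fun x' => Real.exp (σ ^ 2 * τ + k - x') * Ncdf (d1 τ x' k σ))
      (Real.exp (σ ^ 2 * τ + k - x) *
        (phi (d1 τ x k σ) * (σ * Real.sqrt τ)⁻¹ - Ncdf (d1 τ x k σ))) x := by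
  have h := (hasDerivAt_exp_x τ k σ x).mul (hasDerivAt_Nd1_x τ k σ x)
  exact h.congr_deriv (by ring)

lemma g2_deriv (x : ℝ) :
    HasDerivAt (fun x' => Real.exp (σ ^ 2 * τ + k - x') *
        (phi (d1 τ x' k σ) * (σ * Real.sqrt τ)⁻¹ - Ncdf (d1 τ x' k σ)))
      (Real.exp (σ ^ 2 * τ + k - x) *
        (Ncdf (d1 τ x k σ) - 2 * phi (d1 τ x k σ) * (σ * Real.sqrt τ)⁻¹
          - d1 τ x k σ * phi (d1 τ x k σ) * ((σ * Real.sqrt τ)⁻¹) ^ 2)) x := by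
  have hin : HasDerivAt (fun x' => phi (d1 τ x' k σ) * (σ * Real.sqrt τ)⁻¹ - Ncdf (d1 τ x' k σ))
      ((-(d1 τ x k σ) * phi (d1 τ x k σ) * (σ * Real.sqrt τ)⁻¹) * (σ * Real.sqrt τ)⁻¹
        - phi (d1 τ x k σ) * (σ * Real.sqrt τ)⁻¹) x :=
    ((hasDerivAt_phid1_x τ k σ x).mul_const _).sub (hasDerivAt_Nd1_x τ k σ x)
  have h := (hasDerivAt_exp_x τ k σ x).mul hin
  exact h.congr_deriv (by ring)


variable (hτ : 0 < τ) (hσ : 0 < σ)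
include hτ hσ

lemma deriv_BS_eq :
    deriv (fun x' => BS τ x' k σ) =
      fun y => Real.exp (σ ^ 2 * τ + k - y) * Ncdf (d1 τ y k σ) :=
  funext fun y => (BS_deriv1 τ k σ hτ hσ y).deriv

lemma iter2_BS_eq :
    iteratedDeriv 2 (fun x' => BS τ x' k σ) =
      fun y => Real.exp (σ ^ 2 * τ + k - y) *
        (phi (d1 τ y k σ) * (σ * Real.sqrt τ)⁻¹ - Ncdf (d1 τ y k σ)) := by
  rw [show (2:ℕ) = 1 + 1 from rfl, iteratedDeriv_succ, iteratedDeriv_one,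
    deriv_BS_eq τ k σ hτ hσ]
  exact funext fun y => (g1_deriv τ k σ y).deriv

lemma iter3_BS_eq (x : ℝ) :
    iteratedDeriv 3 (fun x' => BS τ x' k σ) x =
      Real.exp (σ ^ 2 * τ + k - x) *
        (Ncdf (d1 τ x k σ) - 2 * phi (d1 τ x k σ) * (σ * Real.sqrt τ)⁻¹
          - d1 τ x k σ * phi (d1 τ x k σ) * ((σ * Real.sqrt τ)⁻¹) ^ 2) := by
  rw [show (3:ℕ) = 2 + 1 from rfl, iteratedDeriv_succ, iter2_BS_eq τ k σ hτ hσ]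
  exact (g2_deriv τ k σ x).deriv

lemma Hfun_eq (x : ℝ) :
    Hfun τ x k σ = Real.exp (σ ^ 2 * τ + k - x) *
      (Ncdf (d1 τ x k σ) - (3/2) * phi (d1 τ x k σ) * (σ * Real.sqrt τ)⁻¹
        - d1 τ x k σ * phi (d1 τ x k σ) * ((σ * Real.sqrt τ)⁻¹) ^ 2 / 2) := by
  unfold Hfun
  rw [iter3_BS_eq τ k σ hτ hσ x, iter2_BS_eq τ k σ hτ hσ]
  ring

omit hτ hσ

lemma hasDerivAt_d1_k (x : ℝ) :
    HasDerivAt (fun k' => d1 τ x k' σ) (-(σ * Real.sqrt τ)⁻¹) k := by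
  unfold d1 d2
  have := ((((hasDerivAt_id k).const_sub x).div_const (σ * Real.sqrt τ)).sub_const
    (σ * Real.sqrt τ / 2)).sub_const (σ * Real.sqrt τ)
  simpa [neg_div, one_div] using this

lemma hasDerivAt_exp_k (x : ℝ) :
    HasDerivAt (fun k' => Real.exp (σ ^ 2 * τ + k' - x)) (Real.exp (σ ^ 2 * τ + k - x)) k := by
  have h := (((hasDerivAt_id k).const_add (σ ^ 2 * τ)).sub_const x).exp
  simpa using h

lemma hasDerivAt_phid1_k (x : ℝ) :
    HasDerivAt (fun k' => phi (d1 τ x k' σ))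
      (-(d1 τ x k σ) * phi (d1 τ x k σ) * -(σ * Real.sqrt τ)⁻¹) k := by
  have := (hasDerivAt_phi (d1 τ x k σ)).comp k (hasDerivAt_d1_k τ k σ x)
  simpa [mul_assoc, Function.comp_def] using this

lemma hasDerivAt_Nd1_k (x : ℝ) :
    HasDerivAt (fun k' => Ncdf (d1 τ x k' σ))
      (phi (d1 τ x k σ) * -(σ * Real.sqrt τ)⁻¹) k :=
  (hasDerivAt_Ncdf _).comp k (hasDerivAt_d1_k τ k σ x)

include hτ hσ

lemma Gfun_eq (x : ℝ) :
    Gfun τ x k σ = Real.exp (σ ^ 2 * τ + k - x) * phi (d1 τ x k σ) *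
      (-(σ * Real.sqrt τ)⁻¹ - (3/2) * d1 τ x k σ * ((σ * Real.sqrt τ)⁻¹) ^ 2
        + (1 - (d1 τ x k σ) ^ 2) * ((σ * Real.sqrt τ)⁻¹) ^ 3 / 2) := by
  have hW : HasDerivAt (fun k' =>
      Ncdf (d1 τ x k' σ) - (3/2) * phi (d1 τ x k' σ) * (σ * Real.sqrt τ)⁻¹
        - d1 τ x k' σ * phi (d1 τ x k' σ) * ((σ * Real.sqrt τ)⁻¹) ^ 2 / 2)
      (phi (d1 τ x k σ) * -(σ * Real.sqrt τ)⁻¹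
        - (3/2) * (-(d1 τ x k σ) * phi (d1 τ x k σ) * -(σ * Real.sqrt τ)⁻¹) * (σ * Real.sqrt τ)⁻¹
        - (-(σ * Real.sqrt τ)⁻¹ * phi (d1 τ x k σ)
            + d1 τ x k σ * (-(d1 τ x k σ) * phi (d1 τ x k σ) * -(σ * Real.sqrt τ)⁻¹))
          * ((σ * Real.sqrt τ)⁻¹) ^ 2 / 2) k := by
    exact ((hasDerivAt_Nd1_k τ k σ x).sub
      (((hasDerivAt_phid1_k τ k σ x).const_mul (3/2)).mul_const _)).sub
      ((((hasDerivAt_d1_k τ k σ x).mul (hasDerivAt_phid1_k τ k σ x)).mul_const _).div_const 2)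
  have hH : HasDerivAt (fun k' => Hfun τ x k' σ)
      (Real.exp (σ ^ 2 * τ + k - x) *
          (Ncdf (d1 τ x k σ) - (3/2) * phi (d1 τ x k σ) * (σ * Real.sqrt τ)⁻¹
            - d1 τ x k σ * phi (d1 τ x k σ) * ((σ * Real.sqrt τ)⁻¹) ^ 2 / 2)
        + Real.exp (σ ^ 2 * τ + k - x) *
          (phi (d1 τ x k σ) * -(σ * Real.sqrt τ)⁻¹
            - (3/2) * (-(d1 τ x k σ) * phi (d1 τ x k σ) * -(σ * Real.sqrt τ)⁻¹) * (σ * Real.sqrt τ)⁻¹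
            - (-(σ * Real.sqrt τ)⁻¹ * phi (d1 τ x k σ)
                + d1 τ x k σ * (-(d1 τ x k σ) * phi (d1 τ x k σ) * -(σ * Real.sqrt τ)⁻¹))
              * ((σ * Real.sqrt τ)⁻¹) ^ 2 / 2)) k := by
    have hfn : (fun k' => Hfun τ x k' σ) = fun k' =>
        Real.exp (σ ^ 2 * τ + k' - x) *
          (Ncdf (d1 τ x k' σ) - (3/2) * phi (d1 τ x k' σ) * (σ * Real.sqrt τ)⁻¹
            - d1 τ x k' σ * phi (d1 τ x k' σ) * ((σ * Real.sqrt τ)⁻¹) ^ 2 / 2) :=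
      funext fun k' => Hfun_eq τ k' σ hτ hσ x
    rw [hfn]
    exact (hasDerivAt_exp_k τ k σ x).mul hW
  unfold Gfun
  rw [hH.deriv, Hfun_eq τ k σ hτ hσ x]
  ring

noncomputable def Bpoly (w u : ℝ) : ℝ :=
  u + (3/2)*w*u^2 - (1-w^2)*u^3/2 + w*u^2 + (3/2)*w^2*u^3 - w*(1-w^2)*u^4/2
    - (3/2)*u^3 - w*u^4

lemma deriv_Gfun (x : ℝ) :
    deriv (fun x' => Gfun τ x' k σ) x =
      phi (d2 τ x k σ) * Bpoly (d1 τ x k σ) ((σ * Real.sqrt τ)⁻¹) := by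
  have hA : HasDerivAt (fun x' =>
      -(σ * Real.sqrt τ)⁻¹ - (3/2) * d1 τ x' k σ * ((σ * Real.sqrt τ)⁻¹) ^ 2
        + (1 - (d1 τ x' k σ) ^ 2) * ((σ * Real.sqrt τ)⁻¹) ^ 3 / 2)
      (-((3/2) * (σ * Real.sqrt τ)⁻¹ * ((σ * Real.sqrt τ)⁻¹) ^ 2)
        + (-(2 * d1 τ x k σ ^ 1 * (σ * Real.sqrt τ)⁻¹)) * ((σ * Real.sqrt τ)⁻¹) ^ 3 / 2) x := by
    have p1 := (((hasDerivAt_d1_x τ k σ x).const_mul (3/2)).mul_const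
      (((σ * Real.sqrt τ)⁻¹) ^ 2)).const_sub (-(σ * Real.sqrt τ)⁻¹)
    have p2 := ((((hasDerivAt_d1_x τ k σ x).pow 2).const_sub 1).mul_const
      (((σ * Real.sqrt τ)⁻¹) ^ 3)).div_const 2
    exact p1.add p2
  have hEphi := (hasDerivAt_exp_x τ k σ x).mul (hasDerivAt_phid1_x τ k σ x)
  have h := hEphi.mul hA
  have hfn : (fun x' => Gfun τ x' k σ) = (fun x' =>
      Real.exp (σ ^ 2 * τ + k - x') * phi (d1 τ x' k σ) *
        (-(σ * Real.sqrt τ)⁻¹ - (3/2) * d1 τ x' k σ * ((σ * Real.sqrt τ)⁻¹) ^ 2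
          + (1 - (d1 τ x' k σ) ^ 2) * ((σ * Real.sqrt τ)⁻¹) ^ 3 / 2)) :=
    funext fun y => Gfun_eq τ k σ hτ hσ y
  rw [hfn]
  erw [h.deriv]
  simp only [Pi.mul_apply]
  rw [← exp_phi_id τ x k σ hτ hσ]
  unfold Bpoly
  ring

end derivs

lemma gauss_cube (z : ℝ) : (1 + |z|) ^ 3 * Real.exp (-z ^ 2 / 2) ≤ 64 := by
  have hz0 : (0:ℝ) ≤ |z| := abs_nonneg z
  have hepos : (0:ℝ) < Real.exp (-z ^ 2 / 2) := Real.exp_pos _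
  rcases le_total |z| 3 with h | h
  · have he : Real.exp (-z ^ 2 / 2) ≤ 1 := by
      rw [← Real.exp_zero]
      exact Real.exp_le_exp.mpr (by nlinarith [sq_nonneg z])
    have h64 : (1 + |z|) ^ 3 ≤ 64 := by
      have := pow_le_pow_left₀ (show (0:ℝ) ≤ 1 + |z| by linarith)
        (show 1 + |z| ≤ 4 by linarith) 3
      norm_num at this; linarith
    nlinarith [mul_le_mul h64 he hepos.le (by norm_num : (0:ℝ) ≤ 64)]
  · have h1 : z ^ 2 / 8 + 1 ≤ Real.exp (z ^ 2 / 8) := Real.add_one_le_exp _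
    have hq : Real.exp (z ^ 2 / 2) = Real.exp (z ^ 2 / 8) ^ 4 := by
      rw [← Real.exp_nat_mul]; congr 1; push_cast; ring
    have ht : (0:ℝ) ≤ z ^ 2 / 8 := by positivity
    have h4 : (1 + z ^ 2 / 8) ^ 4 ≤ Real.exp (z ^ 2 / 8) ^ 4 :=
      pow_le_pow_left₀ (by linarith) (by linarith) 4
    have h6 : z ^ 6 / 128 ≤ Real.exp (z ^ 2 / 2) := by
      rw [hq]
      nlinarith [h4, ht, pow_nonneg ht 2, pow_nonneg ht 4, pow_nonneg ht 3]
    have hprod : Real.exp (z ^ 2 / 2) * Real.exp (-z ^ 2 / 2) = 1 := by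
      rw [← Real.exp_add, show z ^ 2 / 2 + -z ^ 2 / 2 = 0 by ring, Real.exp_zero]
    have hz6 : z ^ 6 = |z| ^ 6 := by rw [← abs_pow, abs_of_nonneg (by positivity)]
    have hae : |z| ^ 6 * Real.exp (-z ^ 2 / 2) ≤ 128 := by
      nlinarith [mul_le_mul_of_nonneg_right h6 hepos.le]
    have ha3 : (27:ℝ) ≤ |z| ^ 3 := by
      have := pow_le_pow_left₀ (show (0:ℝ) ≤ 3 by norm_num) h 3
      norm_num at this; linarith
    have h3e : |z| ^ 3 * Real.exp (-z ^ 2 / 2) ≤ 128 / 27 := by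
      nlinarith [mul_le_mul_of_nonneg_right ha3
        (mul_nonneg (pow_nonneg hz0 3) hepos.le)]
    have hcube : (1 + |z|) ^ 3 ≤ (4 / 3 * |z|) ^ 3 :=
      pow_le_pow_left₀ (by linarith) (by linarith) 3
    nlinarith [mul_le_mul_of_nonneg_right hcube hepos.le]

lemma Bpoly_bound (c₂ z w u : ℝ) (hc2 : 0 < c₂) (hu : 0 < u) (hcu : 1 ≤ c₂ * u)
    (hwz : |w| ≤ |z| + c₂) :
    phi z * |Bpoly w u| ≤ 256 * (1 + c₂) ^ 6 * u ^ 4 := by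
  set m := |w| with hm_def
  have hm : 0 ≤ m := abs_nonneg w
  have hw1 : w ≤ m := le_abs_self w
  have hw2 : -m ≤ w := neg_abs_le w
  have hwsq : w ^ 2 = m ^ 2 := (sq_abs w).symm
  have hw3u : w ^ 3 ≤ m ^ 3 := by
    calc w ^ 3 ≤ |w ^ 3| := le_abs_self _
      _ = m ^ 3 := by rw [abs_pow]
  have hw3l : -(m ^ 3) ≤ w ^ 3 := by
    have := neg_abs_le (w ^ 3); rwa [abs_pow] at this
  have hu2 : (0:ℝ) ≤ u ^ 2 := by positivity
  have hu3 : (0:ℝ) ≤ u ^ 3 := by positivity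
  have hu4 : (0:ℝ) ≤ u ^ 4 := by positivity
  have hB : |Bpoly w u| ≤ u + (3/2)*m*u^2 + u^3/2 + m^2*u^3/2 + m*u^2
      + (3/2)*m^2*u^3 + m*u^4/2 + m^3*u^4/2 + (3/2)*u^3 + m*u^4 := by
    rw [abs_le]
    have m24 : (0:ℝ) ≤ m ^ 2 * u ^ 4 := by positivity
    have m23 : (0:ℝ) ≤ m ^ 2 * u ^ 3 := by positivity
    have m12 : (0:ℝ) ≤ m * u ^ 2 := by positivity
    have m14 : (0:ℝ) ≤ m * u ^ 4 := by positivity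
    have m34 : (0:ℝ) ≤ m ^ 3 * u ^ 4 := by positivity
    constructor <;> unfold Bpoly <;> rw [hwsq] <;>
      linarith [mul_le_mul_of_nonneg_right hw1 hu2,
        mul_le_mul_of_nonneg_right hw2 hu2,
        mul_le_mul_of_nonneg_right hw1 hu4,
        mul_le_mul_of_nonneg_right hw2 hu4,
        mul_le_mul_of_nonneg_right hw1 m24,
        mul_le_mul_of_nonneg_right hw2 m24, hu.le, hu3, m23, m12, m14, m34]
  have hcu2 : 1 ≤ (c₂ * u) ^ 2 := one_le_pow₀ hcu
  have hcu3 : 1 ≤ (c₂ * u) ^ 3 := one_le_pow₀ hcu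
  have l1 : u ≤ c₂ ^ 3 * u ^ 4 := by nlinarith [mul_le_mul_of_nonneg_left hcu3 hu.le]
  have l2 : u ^ 2 ≤ c₂ ^ 2 * u ^ 4 := by nlinarith [mul_le_mul_of_nonneg_left hcu2 hu2]
  have l3 : u ^ 3 ≤ c₂ * u ^ 4 := by nlinarith [mul_le_mul_of_nonneg_left hcu hu3]
  have hSF : u + (3/2)*m*u^2 + u^3/2 + m^2*u^3/2 + m*u^2
      + (3/2)*m^2*u^3 + m*u^4/2 + m^3*u^4/2 + (3/2)*u^3 + m*u^4
      ≤ u ^ 4 * (c₂^3 + (3/2)*m*c₂^2 + c₂/2 + m^2*c₂/2 + m*c₂^2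
        + (3/2)*m^2*c₂ + m/2 + m^3/2 + (3/2)*c₂ + m) := by
    have e2 := mul_le_mul_of_nonneg_left l2 hm
    have e3 := mul_le_mul_of_nonneg_left l3 (pow_nonneg hm 2)
    linarith [l1, l3, e2, e3]
  have hq0 : 1 ≤ (1 + c₂) ^ 3 := by nlinarith
  have hq1 : c₂ ≤ (1 + c₂) ^ 3 := by nlinarith
  have hq2 : c₂ ^ 2 ≤ (1 + c₂) ^ 3 := by nlinarith
  have hq3 : c₂ ^ 3 ≤ (1 + c₂) ^ 3 := by nlinarith
  have hF : (c₂^3 + (3/2)*m*c₂^2 + c₂/2 + m^2*c₂/2 + m*c₂^2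
        + (3/2)*m^2*c₂ + m/2 + m^3/2 + (3/2)*c₂ + m)
      ≤ (1 + c₂) ^ 3 * (3 + 4*m + 2*m^2 + m^3/2) := by
    have b1 := mul_le_mul_of_nonneg_left hq2 hm
    have b2 := mul_le_mul_of_nonneg_left hq1 (pow_nonneg hm 2)
    have b3 := mul_le_mul_of_nonneg_left hq0 hm
    have b5 := mul_le_mul_of_nonneg_left hq0 (pow_nonneg hm 3)
    linarith [b1, b2, b3, b5, hq3, hq1]
  have hG : (3 + 4*m + 2*m^2 + m^3/2 : ℝ) ≤ 4 * (1 + m) ^ 3 := by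
    nlinarith [pow_nonneg hm 2, pow_nonneg hm 3, hm]
  have hmz : (1 + m) ^ 3 ≤ (1 + c₂) ^ 3 * (1 + |z|) ^ 3 := by
    have h1 : 1 + m ≤ (1 + c₂) * (1 + |z|) := by
      nlinarith [mul_nonneg hc2.le (abs_nonneg z)]
    calc (1 + m) ^ 3 ≤ ((1 + c₂) * (1 + |z|)) ^ 3 :=
          pow_le_pow_left₀ (by linarith) h1 3
      _ = (1 + c₂) ^ 3 * (1 + |z|) ^ 3 := mul_pow _ _ _
  have hphipos : 0 ≤ phi z := by unfold phi; positivity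
  have hphi : phi z * (1 + |z|) ^ 3 ≤ 64 := by
    have h2pi : 1 ≤ Real.sqrt (2 * Real.pi) := by
      rw [show (1:ℝ) = Real.sqrt 1 from Real.sqrt_one.symm]
      exact Real.sqrt_le_sqrt (by nlinarith [Real.pi_gt_three])
    have hinv : (Real.sqrt (2 * Real.pi))⁻¹ ≤ 1 := inv_le_one_of_one_le₀ h2pi
    have hg := gauss_cube z
    unfold phi
    calc (Real.sqrt (2 * Real.pi))⁻¹ * Real.exp (-z ^ 2 / 2) * (1 + |z|) ^ 3
        = (Real.sqrt (2 * Real.pi))⁻¹ * ((1 + |z|) ^ 3 * Real.exp (-z ^ 2 / 2)) := by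
          ring
      _ ≤ 1 * 64 := by
          apply mul_le_mul hinv hg (by positivity) (by norm_num)
      _ = 64 := by norm_num
  have c1 : |Bpoly w u| ≤ u ^ 4 * ((1 + c₂) ^ 3 * (4 * (1 + m) ^ 3)) := by
    calc |Bpoly w u| ≤ _ := hB
      _ ≤ u ^ 4 * (c₂^3 + (3/2)*m*c₂^2 + c₂/2 + m^2*c₂/2 + m*c₂^2
          + (3/2)*m^2*c₂ + m/2 + m^3/2 + (3/2)*c₂ + m) := hSF
      _ ≤ u ^ 4 * ((1 + c₂) ^ 3 * (3 + 4*m + 2*m^2 + m^3/2)) :=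
          mul_le_mul_of_nonneg_left hF hu4
      _ ≤ u ^ 4 * ((1 + c₂) ^ 3 * (4 * (1 + m) ^ 3)) :=
          mul_le_mul_of_nonneg_left
            (mul_le_mul_of_nonneg_left hG (by positivity)) hu4
  have c2 : u ^ 4 * ((1 + c₂) ^ 3 * (4 * (1 + m) ^ 3))
      ≤ u ^ 4 * ((1 + c₂) ^ 3 * (4 * ((1 + c₂) ^ 3 * (1 + |z|) ^ 3))) :=
    mul_le_mul_of_nonneg_left
      (mul_le_mul_of_nonneg_left
        (mul_le_mul_of_nonneg_left hmz (by norm_num)) (by positivity)) hu4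
  have step1 : phi z * |Bpoly w u| ≤ phi z * (u ^ 4 *
      ((1 + c₂) ^ 3 * (4 * ((1 + c₂) ^ 3 * (1 + |z|) ^ 3)))) :=
    mul_le_mul_of_nonneg_left (c1.trans c2) hphipos
  calc phi z * |Bpoly w u| ≤ _ := step1
    _ = 4 * (1 + c₂) ^ 6 * u ^ 4 * (phi z * (1 + |z|) ^ 3) := by ring
    _ ≤ 4 * (1 + c₂) ^ 6 * u ^ 4 * 64 :=
        mul_le_mul_of_nonneg_left hphi (by positivity)
    _ = 256 * (1 + c₂) ^ 6 * u ^ 4 := by ring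

/-- pointwise bound on the log-price derivative of `G`. -/
theorem stmt_16 (c₁ c₂ : ℝ) (hc₁ : 0 < c₁) (hc : c₁ ≤ c₂) :
    ∃ C > 0, ∀ τ ∈ Set.Ioc (0 : ℝ) 1, ∀ x k : ℝ, ∀ σ ∈ Set.Icc c₁ c₂,
      |deriv (fun x' => Gfun τ x' k σ) x| ≤ C * τ⁻¹ ^ 2 := by
  have hc₂ : 0 < c₂ := lt_of_lt_of_le hc₁ hc
  refine ⟨256 * (1 + c₂) ^ 6 / c₁ ^ 4, by positivity, ?_⟩
  rintro τ ⟨hτ0, hτ1⟩ x k σ ⟨hσ1, hσ2⟩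
  have hσ0 : 0 < σ := lt_of_lt_of_le hc₁ hσ1
  have hr : 0 < Real.sqrt τ := Real.sqrt_pos.mpr hτ0
  have hs : 0 < σ * Real.sqrt τ := by positivity
  have hu : 0 < (σ * Real.sqrt τ)⁻¹ := inv_pos.mpr hs
  have hr1 : Real.sqrt τ ≤ 1 := by
    rw [show (1:ℝ) = Real.sqrt 1 from Real.sqrt_one.symm]
    exact Real.sqrt_le_sqrt hτ1
  have hsle : σ * Real.sqrt τ ≤ c₂ := by
    calc σ * Real.sqrt τ ≤ c₂ * 1 := mul_le_mul hσ2 hr1 hr.le hc₂.le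
      _ = c₂ := mul_one c₂
  have hcu : 1 ≤ c₂ * (σ * Real.sqrt τ)⁻¹ := by
    rw [← div_eq_mul_inv]
    exact (one_le_div hs).mpr hsle
  have hwz : |d1 τ x k σ| ≤ |d2 τ x k σ| + c₂ := by
    have h1 : |d1 τ x k σ| ≤ |d2 τ x k σ| + (σ * Real.sqrt τ) := by
      unfold d1
      rw [sub_eq_add_neg]
      exact (abs_add_le _ _).trans (by rw [abs_neg, abs_of_nonneg hs.le])
    linarith
  have key := Bpoly_bound c₂ (d2 τ x k σ) (d1 τ x k σ) ((σ * Real.sqrt τ)⁻¹)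
    hc₂ hu hcu hwz
  have hphipos : 0 ≤ phi (d2 τ x k σ) := by unfold phi; positivity
  rw [deriv_Gfun τ k σ hτ0 hσ0 x, abs_mul, abs_of_nonneg hphipos]
  have hsq : Real.sqrt τ ^ 2 = τ := Real.sq_sqrt hτ0.le
  have h4 : (σ * Real.sqrt τ) ^ 4 = σ ^ 4 * τ ^ 2 := by
    rw [mul_pow, show Real.sqrt τ ^ 4 = (Real.sqrt τ ^ 2) ^ 2 by ring, hsq]
  have hlow : c₁ ^ 4 * τ ^ 2 ≤ σ ^ 4 * τ ^ 2 :=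
    mul_le_mul_of_nonneg_right (pow_le_pow_left₀ hc₁.le hσ1 4) (by positivity)
  have hu4 : ((σ * Real.sqrt τ)⁻¹) ^ 4 ≤ 1 / c₁ ^ 4 * τ⁻¹ ^ 2 := by
    rw [inv_pow, h4, show (1 / c₁ ^ 4 * τ⁻¹ ^ 2 : ℝ) = (c₁ ^ 4 * τ ^ 2)⁻¹ by
      rw [mul_inv, inv_pow, one_div]]
    exact inv_anti₀ (by positivity) hlow
  calc phi (d2 τ x k σ) * |Bpoly (d1 τ x k σ) ((σ * Real.sqrt τ)⁻¹)|
      ≤ 256 * (1 + c₂) ^ 6 * ((σ * Real.sqrt τ)⁻¹) ^ 4 := key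
    _ ≤ 256 * (1 + c₂) ^ 6 * (1 / c₁ ^ 4 * τ⁻¹ ^ 2) :=
        mul_le_mul_of_nonneg_left hu4 (by positivity)
    _ = 256 * (1 + c₂) ^ 6 / c₁ ^ 4 * τ⁻¹ ^ 2 := by ring
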